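/- If j < k are nonnegative integers, then ∫_K |h_k - h_j|² dA = ∫_K |h_k|² dA + ∫_K |h_j|² dA ≥ π/4, where h_m(ζ) = √(8m+2) ζ^{4m} and K = {r e^{iθ} : 1/2 < r < 1, π/4 < θ < 3π/4}. -/

import Mathlib

open MeasureTheory Complex Real

/-- The annular sector `K = {r e^{iθ} : 1/2 < r < 1, π/4 < θ < 3π/4}`. -/
def sectorK : Set ℂ :=
  {ζ : ℂ | ∃ r θ : ℝ, 1/2 < r ∧ r < 1 ∧ π/4 < θ ∧ θ < 3*π/4 ∧
    ζ = (r : ℂ) * Complex.exp (θ * Complex.I)}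

/-- `h_m(ζ) = √(8m+2) ζ^{4m}`. -/
noncomputable def hseq (m : ℕ) (ζ : ℂ) : ℂ :=
  (Real.sqrt (8*m + 2) : ℂ) * ζ ^ (4*m)

/-!
In polar coordinates `ζ = r e^{iθ}` the real inner product
`⟪h_j ζ, h_k ζ⟫ = Re (h_k ζ · conj (h_j ζ))` is a power of `r` times `cos (4 (k - j) θ)`.
The angular interval `(π/4, 3π/4)` has length `π/2`, a whole number of periods of `cos (4 n θ)`
for `n ≠ 0`, so the cross term of `|h_k - h_j|²` integrates to zero over `K`. The factor
`√(8m+2)` normalises the radial integral, giving `∫_K |h_m|² = (1 - 2^{-(8m+2)}) π/2`.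
-/

open Set
open scoped InnerProductSpace

theorem setIntegral_image_polarCoord_symm {E : Type*} [NormedAddCommGroup E] [NormedSpace ℝ E]
    {s : Set (ℝ × ℝ)} (hs : MeasurableSet s) (hst : s ⊆ Complex.polarCoord.target) (f : ℂ → E) :
    ∫ z in Complex.polarCoord.symm '' s, f z = ∫ p in s, p.1 • f (Complex.polarCoord.symm p) := by
  have hsymm : (Complex.polarCoord.symm : ℝ × ℝ → ℂ) =
      measurableEquivRealProd.symm ∘ polarCoord.symm := rfl
  rw [hsymm, image_comp, (volume_preserving_equiv_real_prod.symm).setIntegral_image_emb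
      measurableEquivRealProd.symm.measurableEmbedding,
    integral_image_eq_integral_abs_det_fderiv_smul volume hs
      (fun p _ ↦ (hasFDerivAt_polarCoord_symm p).hasFDerivWithinAt)
      (polarCoord.symm.injOn.mono hst)]
  refine setIntegral_congr_fun hs fun p hp ↦ ?_
  rw [det_fderivPolarCoordSymm, abs_of_pos (hst hp).1]
  rfl

theorem polarCoord_symm_eq_ofReal_mul_exp (p : ℝ × ℝ) :
    Complex.polarCoord.symm p = p.1 * exp (p.2 * I) := by
  rw [Complex.polarCoord_symm_apply, exp_mul_I, ← ofReal_cos, ← ofReal_sin]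

theorem sectorK_eq_polarCoord_symm_image :
    sectorK = Complex.polarCoord.symm '' (Ioo (1/2) 1 ×ˢ Ioo (π/4) (3*π/4)) := by
  ext z
  simp only [sectorK, mem_ofPred_eq, mem_image, mem_prod, mem_Ioo, Prod.exists,
    polarCoord_symm_eq_ofReal_mul_exp]
  grind

theorem Ioo_prod_Ioo_subset_polarCoord_target :
    Ioo (1/2 : ℝ) 1 ×ˢ Ioo (π/4) (3*π/4) ⊆ Complex.polarCoord.target := by
  rw [Complex.polarCoord_target]
  refine prod_mono (Ioo_subset_Ioi_self.trans (Ioi_subset_Ioi (by norm_num)))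
    (Ioo_subset_Ioo ?_ ?_) <;> linarith [pi_pos]

theorem integral_sectorK {E : Type*} [NormedAddCommGroup E] [NormedSpace ℝ E] (f : ℂ → E) :
    ∫ z in sectorK, f z =
      ∫ p in Ioo (1/2 : ℝ) 1 ×ˢ Ioo (π/4) (3*π/4), p.1 • f (Complex.polarCoord.symm p) := by
  rw [sectorK_eq_polarCoord_symm_image, setIntegral_image_polarCoord_symm
    (measurableSet_Ioo.prod measurableSet_Ioo) Ioo_prod_Ioo_subset_polarCoord_target]

theorem inner_hseq_polarCoord_symm (j k : ℕ) (p : ℝ × ℝ) :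
    ⟪hseq j (Complex.polarCoord.symm p), hseq k (Complex.polarCoord.symm p)⟫_ℝ =
      √(8*j+2) * √(8*k+2) * p.1 ^ (4*j + 4*k) * Real.cos (4 * ((k:ℝ) - j) * p.2) := by
  have hpolar (m : ℕ) : hseq m (Complex.polarCoord.symm p) =
      ↑(√(8*m+2) * p.1 ^ (4*m)) * exp (↑(4*m*p.2 : ℝ) * I) := by
    rw [polarCoord_symm_eq_ofReal_mul_exp, hseq, mul_pow, ← Complex.exp_nat_mul]
    push_cast
    ring_nf
  rw [Complex.inner, hpolar, hpolar, map_mul, conj_ofReal, ← exp_conj, map_mul, conj_ofReal,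
    conj_I, mul_mul_mul_comm, ← ofReal_mul, ← Complex.exp_add, re_ofReal_mul, mul_neg,
    ← sub_eq_add_neg, ← sub_mul, ← ofReal_sub, exp_ofReal_mul_I_re]
  ring_nf

theorem integral_cos_four_int_mul_eq_zero {n : ℤ} (hn : n ≠ 0) :
    ∫ θ in π/4..3*π/4, Real.cos (4 * n * θ) = 0 := by
  have h4n : (4 * n : ℝ) ≠ 0 := by exact_mod_cast mul_ne_zero four_ne_zero hn
  rw [intervalIntegral.integral_comp_mul_left Real.cos h4n, integral_cos,
    show 4 * n * (3*π/4) = ((3 * n : ℤ) : ℝ) * π by push_cast; ring,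
    show 4 * n * (π/4) = (n : ℝ) * π by ring, Real.sin_int_mul_pi, Real.sin_int_mul_pi,
    sub_zero, smul_zero]

theorem integral_sectorK_inner_hseq (j k : ℕ) :
    ∫ z in sectorK, ⟪hseq j z, hseq k z⟫_ℝ =
      √(8*j+2) * √(8*k+2) * (∫ r in (1/2 : ℝ)..1, r ^ (4*j + 4*k + 1)) *
        ∫ θ in π/4..3*π/4, Real.cos (4 * ((k:ℝ) - j) * θ) := by
  have hsplit := setIntegral_prod_mul (μ := volume) (ν := volume)
    (fun r ↦ √(8*j+2) * √(8*k+2) * r ^ (4*j + 4*k + 1))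
    (fun θ ↦ Real.cos (4 * ((k:ℝ) - j) * θ)) (Ioo (1/2 : ℝ) 1) (Ioo (π/4) (3*π/4))
  rw [integral_const_mul] at hsplit
  rw [integral_sectorK, intervalIntegral.integral_of_le (by norm_num),
    intervalIntegral.integral_of_le (by linarith [pi_pos]), integral_Ioc_eq_integral_Ioo,
    integral_Ioc_eq_integral_Ioo, ← hsplit, Measure.volume_eq_prod]
  refine setIntegral_congr_fun (measurableSet_Ioo.prod measurableSet_Ioo) fun p _ ↦ ?_
  rw [smul_eq_mul, inner_hseq_polarCoord_symm]
  ring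

theorem integral_sectorK_inner_hseq_of_ne {j k : ℕ} (hjk : j ≠ k) :
    ∫ z in sectorK, ⟪hseq j z, hseq k z⟫_ℝ = 0 := by
  have hkj : ((k : ℤ) - j) ≠ 0 := sub_ne_zero.mpr (by exact_mod_cast hjk.symm)
  have hcos := integral_cos_four_int_mul_eq_zero hkj
  push_cast at hcos
  rw [integral_sectorK_inner_hseq, hcos, mul_zero]

theorem integral_sectorK_norm_hseq_sq (m : ℕ) :
    ∫ z in sectorK, ‖hseq m z‖ ^ 2 = (1 - (1/2 : ℝ) ^ (8*m + 2)) * (π/2) := by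
  simp only [← real_inner_self_eq_norm_sq, integral_sectorK_inner_hseq, integral_pow, sub_self,
    mul_zero, zero_mul, Real.cos_zero, intervalIntegral.integral_const, smul_eq_mul, mul_one]
  rw [Real.mul_self_sqrt (by positivity)]
  have h8m : (8*m + 2 : ℝ) ≠ 0 := by positivity
  push_cast
  field_simp
  ring

theorem sectorK_subset_closedBall : sectorK ⊆ Metric.closedBall 0 1 := by
  rintro _ ⟨r, θ, hr, hr', -, -, rfl⟩
  rw [mem_closedBall_zero_iff, norm_mul, norm_exp_ofReal_mul_I, mul_one, norm_real,
    Real.norm_of_nonneg (by linarith)]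
  exact hr'.le

theorem Continuous.integrableOn_sectorK {E : Type*} [NormedAddCommGroup E] {f : ℂ → E}
    (hf : Continuous f) : IntegrableOn f sectorK :=
  (hf.continuousOn.integrableOn_compact (isCompact_closedBall 0 1)).mono_set
    sectorK_subset_closedBall

theorem continuous_hseq (m : ℕ) : Continuous (hseq m) :=
  continuous_const.mul (continuous_pow _)

theorem separation_on_K (j k : ℕ) (hjk : j < k) :
    (∫ ζ in sectorK, ‖hseq k ζ - hseq j ζ‖ ^ 2 ∂volume
        = (∫ ζ in sectorK, ‖hseq k ζ‖ ^ 2 ∂volume)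
          + ∫ ζ in sectorK, ‖hseq j ζ‖ ^ 2 ∂volume) ∧
    π / 4 ≤ ∫ ζ in sectorK, ‖hseq k ζ - hseq j ζ‖ ^ 2 ∂volume := by
  have hnorm (m : ℕ) : IntegrableOn (fun z ↦ ‖hseq m z‖ ^ 2) sectorK :=
    ((continuous_hseq m).norm.pow 2).integrableOn_sectorK
  have hinner : IntegrableOn (fun z ↦ 2 * ⟪hseq k z, hseq j z⟫_ℝ) sectorK :=
    (continuous_const.mul ((continuous_hseq k).inner (continuous_hseq j))).integrableOn_sectorK
  have hdiff : IntegrableOn (fun z ↦ ‖hseq k z‖ ^ 2 - 2 * ⟪hseq k z, hseq j z⟫_ℝ) sectorK :=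
    (hnorm k).sub hinner
  have hpythagoras : ∫ ζ in sectorK, ‖hseq k ζ - hseq j ζ‖ ^ 2
      = (∫ ζ in sectorK, ‖hseq k ζ‖ ^ 2) + ∫ ζ in sectorK, ‖hseq j ζ‖ ^ 2 := by
    simp_rw [norm_sub_sq_real]
    rw [integral_add hdiff (hnorm j), integral_sub (hnorm k) hinner,
      integral_const_mul, integral_sectorK_inner_hseq_of_ne hjk.ne', mul_zero, sub_zero]
  refine ⟨hpythagoras, ?_⟩
  rw [hpythagoras, integral_sectorK_norm_hseq_sq, integral_sectorK_norm_hseq_sq]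
  have hk : (1/2 : ℝ) ^ (8*k + 2) ≤ 1/2 := pow_le_of_le_one (by norm_num) (by norm_num) (by omega)
  have hj : (1/2 : ℝ) ^ (8*j + 2) ≤ 1 := pow_le_one₀ (by norm_num) (by norm_num)
  nlinarith [pi_pos]
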